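/- For every α ∈ ℂ, the algebra 𝔠₄₉(α) on ℂ⁵ with nonzero basis products e₁e₁ = e₃, e₁e₂ = e₅, e₂e₂ = e₄, e₃e₃ = α e₅, e₃e₄ = e₅, e₄e₄ = e₅ is a nilpotent commutative algebra (A⁶ = 0) that satisfies the almost-Jordan identity 2·(((y·x)·x)·x) + y·((x·x)·x) = 3·((y·(x·x))·x) for all x, y, but does not satisfy the Jordan identity: there exist x, y with ((x·x)·y)·x ≠ (x·x)·(y·x). -/

import Mathlib

/-!
Products of two elements lie in `span(e₃, e₄, e₅)`, and multiplying such an element by anything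
lands in `span(e₅)`, which annihilates the whole algebra. Hence every product of at least three
factors lies in `span(e₅)`, every product of at least five factors vanishes, and so does every
product of four factors split as `3 + 1`. All terms of the almost-Jordan identity are of the
latter kind, so it reads `0 = 0`; the Jordan identity fails because `(x x)(y x)`, split as
`2 + 2`, need not vanish.
-/

/-- `IsProdOf μ n z` says that `z` is a product of `n` elements under the
multiplication `μ`, with some arrangement of parentheses. -/
inductive IsProdOf {V : Type*} (μ : V → V → V) : ℕ → V → Prop
  | base (x : V) : IsProdOf μ 1 x
  | mul {m n : ℕ} {a b : V} :
      IsProdOf μ m a → IsProdOf μ n b → IsProdOf μ (m + n) (μ a b)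

/-- Structure constants of the algebra 𝔠₄₉(α) (e₁e₁ = e₃, e₁e₂ = e₅, e₂e₂ = e₄, e₃e₃ = α e₅, e₃e₄ = e₅, e₄e₄ = e₅) on ℂ⁵ (basis `e₁, …, e₅` indexed by `Fin 5`),
extended symmetrically; unlisted products of basis vectors are zero. -/
noncomputable def tbl49 (α : ℂ) : Fin 5 → Fin 5 → Fin 5 → ℂ :=
  ![![![0,0,1,0,0], ![0,0,0,0,1], 0, 0, 0],
    ![![0,0,0,0,1], ![0,0,0,1,0], 0, 0, 0],
    ![0, 0, ![0,0,0,0,α], ![0,0,0,0,1], 0],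
    ![0, 0, ![0,0,0,0,1], ![0,0,0,0,1], 0],
    0]

/-- The bilinear multiplication of the algebra on ℂ⁵. -/
noncomputable def mul49 (α : ℂ) (x y : Fin 5 → ℂ) : Fin 5 → ℂ :=
  fun k => ∑ i, ∑ j, x i * y j * tbl49 α i j k

namespace IsProdOf

variable {V : Type*} {μ : V → V → V}

lemma one_le {n : ℕ} {z : V} (h : IsProdOf μ n z) : 1 ≤ n := by
  induction h <;> omega

end IsProdOf

section Mul49

variable (α : ℂ)

lemma mul49_eq (x y : Fin 5 → ℂ) :
    mul49 α x y = ![0, 0, x 0 * y 0, x 1 * y 1,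
      x 0 * y 1 + x 1 * y 0 + α * (x 2 * y 2) + x 2 * y 3 + x 3 * y 2 + x 3 * y 3] := by
  funext k
  fin_cases k <;>
    · simp [mul49, tbl49, Fin.sum_univ_five]
      try ring

lemma mul49_comm (x y : Fin 5 → ℂ) : mul49 α x y = mul49 α y x := by
  funext k
  rw [mul49_eq, mul49_eq]
  fin_cases k <;>
    · simp
      try ring

lemma mul49_eq_zero_of_forall_ne_four {y : Fin 5 → ℂ} (hy : ∀ i ≠ 4, y i = 0)
    (x : Fin 5 → ℂ) : mul49 α x y = 0 := by
  funext k
  rw [mul49_eq, hy 0 (by decide), hy 1 (by decide), hy 2 (by decide), hy 3 (by decide)]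
  fin_cases k <;> simp

lemma mul49_mul49_apply_of_ne_four (x y z : Fin 5 → ℂ) {i : Fin 5} (hi : i ≠ 4) :
    mul49 α (mul49 α x y) z i = 0 := by
  rw [mul49_eq α (mul49 α x y), mul49_eq α x y]
  fin_cases i <;> simp_all

lemma mul49_mul49_mul49 (x y z w : Fin 5 → ℂ) :
    mul49 α (mul49 α (mul49 α x y) z) w = 0 := by
  rw [mul49_comm]
  exact mul49_eq_zero_of_forall_ne_four α (fun _ => mul49_mul49_apply_of_ne_four α x y z) w

lemma IsProdOf.mul49_apply_of_three_le {n : ℕ} {z : Fin 5 → ℂ} (h : IsProdOf (mul49 α) n z)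
    (hn : 3 ≤ n) {i : Fin 5} (hi : i ≠ 4) : z i = 0 := by
  obtain _ | @⟨m, k, a, b, ha, hb⟩ := h
  · omega
  by_cases hm : 2 ≤ m
  · obtain _ | ⟨-, -⟩ := ha
    · omega
    exact mul49_mul49_apply_of_ne_four α _ _ b hi
  · obtain _ | ⟨-, -⟩ := hb
    · have := ha.one_le; omega
    rw [mul49_comm]
    exact mul49_mul49_apply_of_ne_four α _ _ a hi

lemma IsProdOf.mul49_eq_zero_of_five_le {n : ℕ} {z : Fin 5 → ℂ} (h : IsProdOf (mul49 α) n z)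
    (hn : 5 ≤ n) : z = 0 := by
  obtain _ | @⟨m, k, a, b, ha, hb⟩ := h
  · omega
  by_cases hm : 3 ≤ m
  · rw [mul49_comm]
    exact mul49_eq_zero_of_forall_ne_four α (fun _ => ha.mul49_apply_of_three_le α hm) b
  · exact mul49_eq_zero_of_forall_ne_four α (fun _ => hb.mul49_apply_of_three_le α (by omega)) a

end Mul49

theorem c49_properties (α : ℂ) :
    (∀ x y : Fin 5 → ℂ, mul49 α x y = mul49 α y x) ∧
    (∀ z : Fin 5 → ℂ, IsProdOf (mul49 α) 6 z → z = 0) ∧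
    (∀ x y : Fin 5 → ℂ,
        (2 : ℂ) • mul49 α (mul49 α (mul49 α y x) x) x + mul49 α y (mul49 α (mul49 α x x) x) =
          (3 : ℂ) • mul49 α (mul49 α y (mul49 α x x)) x) ∧
    (∃ x y : Fin 5 → ℂ,
        mul49 α (mul49 α (mul49 α x x) y) x ≠ mul49 α (mul49 α x x) (mul49 α y x)) := by
  refine ⟨mul49_comm α, fun z hz => hz.mul49_eq_zero_of_five_le α (by norm_num), ?_, ?_⟩
  · intro x y
    rw [mul49_mul49_mul49, mul49_comm α y, mul49_mul49_mul49, mul49_comm α y,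
      mul49_mul49_mul49]
    simp
  · refine ⟨![1, 1, 0, 0, 0], ![0, 1, 0, 0, 0], fun h => ?_⟩
    rw [mul49_mul49_mul49] at h
    have h4 := congrFun h 4
    simp [mul49_eq] at h4
    norm_num at h4
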